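/- For d ≥ 3 and D ∈ {2,3}, every nonzero vector in the null space of the tomography matrix A_d^D has at least 2^D nonzero entries and at least 2^{D−1} negative entries, and both bounds are attained; consequently the Kruskal rank of A_d^D equals 2^D − 1. -/

import Mathlib

open Matrix Kronecker

/-- The matrix `M = [−1ᵀ_{d−1}; I_{d−1}] ∈ ℝ^{d×(d−1)}`. -/
def Mmat (d : ℕ) : Matrix (Fin d) (Fin (d - 1)) ℝ :=
  Matrix.of fun i j => if (i : ℕ) = 0 then -1 else if (i : ℕ) = (j : ℕ) + 1 then 1 else 0

/-- The all-ones row vector `1_dᵀ ∈ ℝ^{1×d}`. -/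
def onesRow (d : ℕ) : Matrix (Fin 1) (Fin d) ℝ := Matrix.of fun _ _ => 1

/-- 2D tomography matrix `A_d^2 = [I_d ⊗ 1_dᵀ ; 1_dᵀ ⊗ I_d]`. -/
def A2 (d : ℕ) : Matrix ((Fin d × Fin 1) ⊕ (Fin 1 × Fin d)) (Fin d × Fin d) ℝ :=
  Matrix.fromRows ((1 : Matrix (Fin d) (Fin d) ℝ) ⊗ₖ onesRow d)
    (onesRow d ⊗ₖ (1 : Matrix (Fin d) (Fin d) ℝ))

/-- 3D tomography matrix `A_d^3 = [1ᵀ⊗I⊗I ; I⊗1ᵀ⊗I ; I⊗I⊗1ᵀ]`. -/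
def A3 (d : ℕ) :
    Matrix (((Fin 1 × Fin d) × Fin d) ⊕ (((Fin d × Fin 1) × Fin d) ⊕ ((Fin d × Fin d) × Fin 1)))
      ((Fin d × Fin d) × Fin d) ℝ :=
  Matrix.fromRows ((onesRow d ⊗ₖ (1 : Matrix (Fin d) (Fin d) ℝ)) ⊗ₖ (1 : Matrix (Fin d) (Fin d) ℝ))
    (Matrix.fromRows
      (((1 : Matrix (Fin d) (Fin d) ℝ) ⊗ₖ onesRow d) ⊗ₖ (1 : Matrix (Fin d) (Fin d) ℝ))
      (((1 : Matrix (Fin d) (Fin d) ℝ) ⊗ₖ (1 : Matrix (Fin d) (Fin d) ℝ)) ⊗ₖ onesRow d))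

/-- `B_d^2 = M ⊗ M`. -/
def B2 (d : ℕ) : Matrix (Fin d × Fin d) (Fin (d - 1) × Fin (d - 1)) ℝ :=
  Mmat d ⊗ₖ Mmat d

/-- `B_d^3 = M ⊗ M ⊗ M`. -/
def B3 (d : ℕ) :
    Matrix ((Fin d × Fin d) × Fin d) ((Fin (d - 1) × Fin (d - 1)) × Fin (d - 1)) ℝ :=
  (Mmat d ⊗ₖ Mmat d) ⊗ₖ Mmat d

/-- Every set of `r` columns of `A` is linearly independent. -/
def colsIndep {α β : Type*} [Fintype α] [Fintype β] [DecidableEq β]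
    (A : Matrix α β ℝ) (r : ℕ) : Prop :=
  ∀ T : Finset β, T.card = r → LinearIndependent ℝ (fun j : T => (Aᵀ (j : β)))

/-!
A null vector of `A_d^D` is a `D`-dimensional array all of whose axis-parallel line sums vanish.
A nonzero line with zero sum has a positive and a negative entry, so it passes through two
distinct nonzero hyperplane slices, each a null array of dimension `D - 1`. Inductively each slice
has at least `2^(D-1)` nonzero and `2^(D-2)` negative entries, and the two slices double this.
The `D`-fold outer power of `e₀ - e₁` attains both bounds. Hence the spark of `A_d^D` is `2^D`:
every `2^D - 1` columns are independent, while the support of that outer power gives `2^D`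
dependent columns.
-/

open Finset

section SignCounts

variable {ι α β γ : Type*} [Fintype ι] [Fintype α] [Fintype β] [Fintype γ]

lemma exists_pos_and_neg_of_sum_eq_zero {f : ι → ℝ} (hs : ∑ i, f i = 0) (hf : f ≠ 0) :
    (∃ i, 0 < f i) ∧ ∃ i, f i < 0 := by
  obtain ⟨i, hi⟩ := Function.ne_iff.mp hf
  obtain ⟨j, -, hj⟩ := exists_pos_of_sum_zero_of_exists_nonzero f hs ⟨i, mem_univ i, hi⟩
  obtain ⟨k, -, hk⟩ := exists_pos_of_sum_zero_of_exists_nonzero (-f) (by simp [hs])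
    ⟨i, mem_univ i, by simpa using hi⟩
  exact ⟨⟨j, hj⟩, k, by simpa using hk⟩

lemma card_ne_zero_and_card_neg_of_sum_eq_zero {f : ι → ℝ} (hs : ∑ i, f i = 0) (hf : f ≠ 0) :
    2 ≤ #{i | f i ≠ 0} ∧ 1 ≤ #{i | f i < 0} := by
  obtain ⟨⟨i, hi⟩, j, hj⟩ := exists_pos_and_neg_of_sum_eq_zero hs hf
  refine ⟨one_lt_card.mpr ⟨i, by simp [hi.ne'], j, by simp [hj.ne], ?_⟩,
    card_pos.mpr ⟨j, by simp [hj]⟩⟩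
  rintro rfl
  exact hi.not_gt hj

lemma card_filter_prod_eq_sum (p : α × β → Prop) [DecidablePred p] :
    #{q | p q} = ∑ b, #{a | p (a, b)} := by
  simp only [card_filter, Fintype.sum_prod_type_right]

theorem two_mul_le_card_of_fiber_sums_eq_zero {w : α × β → ℝ} {m n : ℕ}
    (hfiber : ∀ a, ∑ b, w (a, b) = 0)
    (hslice : ∀ b, (fun a => w (a, b)) ≠ 0 →
      m ≤ #{a | w (a, b) ≠ 0} ∧ n ≤ #{a | w (a, b) < 0})
    (hw : w ≠ 0) :
    2 * m ≤ #{q | w q ≠ 0} ∧ 2 * n ≤ #{q | w q < 0} := by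
  obtain ⟨⟨a, b⟩, hab⟩ := Function.ne_iff.mp hw
  obtain ⟨⟨b₁, h₁⟩, b₂, h₂⟩ :=
    exists_pos_and_neg_of_sum_eq_zero (hfiber a) (Function.ne_iff.mpr ⟨b, hab⟩)
  have hb : b₁ ≠ b₂ := by
    rintro rfl
    exact h₁.not_gt h₂
  obtain ⟨hm₁, hn₁⟩ := hslice b₁ (Function.ne_iff.mpr ⟨a, h₁.ne'⟩)
  obtain ⟨hm₂, hn₂⟩ := hslice b₂ (Function.ne_iff.mpr ⟨a, h₂.ne⟩)
  have two_slices (p : ℝ → Prop) [DecidablePred p] :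
      #{a | p (w (a, b₁))} + #{a | p (w (a, b₂))} ≤ #{q | p (w q)} := by
    rw [card_filter_prod_eq_sum]
    exact add_le_sum (f := fun b => #{a | p (w (a, b))}) (fun _ _ => Nat.zero_le _)
      (mem_univ _) (mem_univ _) hb
  have hne := two_slices (· ≠ 0)
  have hneg := two_slices (· < 0)
  constructor <;> omega

theorem card_ne_zero_and_card_neg_of_line_sums_eq_zero₂ {w : α × β → ℝ}
    (hrow : ∀ a, ∑ b, w (a, b) = 0) (hcol : ∀ b, ∑ a, w (a, b) = 0) (hw : w ≠ 0) :
    4 ≤ #{q | w q ≠ 0} ∧ 2 ≤ #{q | w q < 0} :=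
  two_mul_le_card_of_fiber_sums_eq_zero hrow
    (fun b hb => card_ne_zero_and_card_neg_of_sum_eq_zero (hcol b) hb) hw

theorem card_ne_zero_and_card_neg_of_line_sums_eq_zero₃ {w : (α × β) × γ → ℝ}
    (h₁ : ∀ b c, ∑ a, w ((a, b), c) = 0) (h₂ : ∀ a c, ∑ b, w ((a, b), c) = 0)
    (h₃ : ∀ a b, ∑ c, w ((a, b), c) = 0) (hw : w ≠ 0) :
    8 ≤ #{q | w q ≠ 0} ∧ 4 ≤ #{q | w q < 0} :=
  two_mul_le_card_of_fiber_sums_eq_zero (fun p => h₃ p.1 p.2)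
    (fun c hc => card_ne_zero_and_card_neg_of_line_sums_eq_zero₂
      (fun a => h₂ a c) (fun b => h₁ b c) hc) hw

end SignCounts

lemma sum_smul_transpose_eq_mulVec {α β : Type*} [Fintype β] (A : Matrix α β ℝ)
    {T : Finset β} {v : β → ℝ} (hv : ∀ j ∉ T, v j = 0) : ∑ j : T, v j • Aᵀ j = A *ᵥ v := by
  ext a
  simp only [Finset.sum_apply, Pi.smul_apply, transpose_apply, smul_eq_mul, mulVec, dotProduct]
  rw [sum_coe_sort T (fun j => v j * A a j)]
  refine (sum_subset (subset_univ T) fun j _ hj => by simp [hv j hj]).trans ?_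
  simp only [mul_comm]

section KruskalRank

variable {α β : Type*} [Fintype α] [Fintype β] [DecidableEq β]

theorem colsIndep_of_lt {A : Matrix α β ℝ} {s r : ℕ}
    (hs : ∀ v, A *ᵥ v = 0 → v ≠ 0 → s ≤ #{j | v j ≠ 0}) (hr : r < s) :
    colsIndep A r := by
  intro T hT
  rw [Fintype.linearIndependent_iff]
  intro g hg j
  set v : β → ℝ := fun c => if h : c ∈ T then g ⟨c, h⟩ else 0
  have hvT : ∀ c ∉ T, v c = 0 := fun c hc => dif_neg hc
  have hv : v = 0 := by
    by_contra hv0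
    have hAv : A *ᵥ v = 0 := by
      rw [← sum_smul_transpose_eq_mulVec A hvT]
      simpa [v] using hg
    have hsupp : #{c | v c ≠ 0} ≤ r :=
      hT ▸ card_le_card fun c hc => by_contra fun h => (mem_filter.mp hc).2 (hvT c h)
    have := hs v hAv hv0
    omega
  simpa [v] using congrFun hv j

theorem not_colsIndep_of_mulVec_eq_zero {A : Matrix α β ℝ} {v : β → ℝ} (hAv : A *ᵥ v = 0)
    (hv : v ≠ 0) {r : ℕ} (hvr : #{j | v j ≠ 0} ≤ r) (hr : r ≤ Fintype.card β) :
    ¬ colsIndep A r := by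
  intro hA
  obtain ⟨T, hsupp, hT⟩ := exists_superset_card_eq hvr hr
  have hvT : ∀ j ∉ T, v j = 0 := fun j hj => by_contra fun h => hj (hsupp (by simp [h]))
  have hvanish := Fintype.linearIndependent_iff.mp (hA T hT) (fun j => v j)
    (by rw [sum_smul_transpose_eq_mulVec A hvT, hAv])
  exact hv (funext fun j => if hj : j ∈ T then hvanish ⟨j, hj⟩ else hvT j hj)

theorem isGreatest_colsIndep {A : Matrix α β ℝ} {s : ℕ}
    (hs : ∀ v, A *ᵥ v = 0 → v ≠ 0 → s ≤ #{j | v j ≠ 0})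
    {v : β → ℝ} (hAv : A *ᵥ v = 0) (hv : v ≠ 0) (hvs : #{j | v j ≠ 0} = s) :
    IsGreatest {r | r ≤ Fintype.card β ∧ colsIndep A r} (s - 1) := by
  obtain ⟨j, hj⟩ := Function.ne_iff.mp hv
  have hs_pos : 0 < s := hvs ▸ card_pos.mpr ⟨j, by simpa using hj⟩
  have hs_le : s ≤ Fintype.card β := hvs ▸ card_le_univ _
  refine ⟨⟨by omega, colsIndep_of_lt hs (by omega)⟩, fun r ⟨hr, hA⟩ => ?_⟩
  by_contra! hsr
  exact not_colsIndep_of_mulVec_eq_zero hAv hv (by omega) hr hA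

end KruskalRank

section Witness

variable {α β : Type*}

def outerProd (f : α → ℝ) (g : β → ℝ) : α × β → ℝ := fun q => f q.1 * g q.2

lemma card_outerProd_ne_zero [Fintype α] [Fintype β] (f : α → ℝ) (g : β → ℝ) :
    #{q | outerProd f g q ≠ 0} = #{a | f a ≠ 0} * #{b | g b ≠ 0} := by
  rw [← card_product]
  congr 1
  ext q
  simp [outerProd, mem_product]

lemma card_outerProd_pos [Fintype α] [Fintype β] (f : α → ℝ) (g : β → ℝ) :
    #{q | 0 < outerProd f g q} =
      #{a | 0 < f a} * #{b | 0 < g b} + #{a | f a < 0} * #{b | g b < 0} := by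
  classical
  rw [← card_product, ← card_product, ← card_union_of_disjoint]
  · congr 1
    ext q
    simp [outerProd, mem_product, mul_pos_iff]
  · exact disjoint_left.mpr fun q hq hq' => by
      simp only [mem_product, mem_filter] at hq hq'
      exact hq.1.2.not_gt hq'.1.2

lemma card_outerProd_neg [Fintype α] [Fintype β] (f : α → ℝ) (g : β → ℝ) :
    #{q | outerProd f g q < 0} =
      #{a | 0 < f a} * #{b | g b < 0} + #{a | f a < 0} * #{b | 0 < g b} := by
  classical
  rw [← card_product, ← card_product, ← card_union_of_disjoint]
  · congr 1
    ext q
    simp [outerProd, mem_product, mul_neg_iff]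
  · exact disjoint_left.mpr fun q hq hq' => by
      simp only [mem_product, mem_filter] at hq hq'
      exact hq.1.2.not_gt hq'.1.2

lemma sum_outerProd_left [Fintype α] (f : α → ℝ) (g : β → ℝ) (b : β) :
    ∑ a, outerProd f g (a, b) = (∑ a, f a) * g b := by
  simp [outerProd, sum_mul]

lemma sum_outerProd_right [Fintype β] (f : α → ℝ) (g : β → ℝ) (a : α) :
    ∑ b, outerProd f g (a, b) = f a * ∑ b, g b := by
  simp [outerProd, mul_sum]

end Witness

def dipole (d : ℕ) : Fin d → ℝ :=
  fun i => if (i : ℕ) = 0 then 1 else if (i : ℕ) = 1 then -1 else 0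

section Dipole

variable {d : ℕ}

lemma sum_dipole (hd : 2 ≤ d) : ∑ i, dipole d i = 0 := by
  obtain ⟨m, rfl⟩ : ∃ m, d = m + 2 := ⟨d - 2, by omega⟩
  simp [dipole, Fin.sum_univ_succ]

lemma card_dipole_ne_zero (hd : 2 ≤ d) : #{i | dipole d i ≠ 0} = 2 := by
  rw [card_eq_two]
  refine ⟨⟨0, by omega⟩, ⟨1, by omega⟩, by simp, ?_⟩
  ext ⟨i, hi⟩
  simp only [mem_filter, mem_univ, true_and, mem_insert, mem_singleton, Fin.ext_iff]
  unfold dipole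
  split_ifs <;> simp_all

lemma card_dipole_pos (hd : 2 ≤ d) : #{i | 0 < dipole d i} = 1 := by
  rw [card_eq_one]
  refine ⟨⟨0, by omega⟩, ?_⟩
  ext ⟨i, hi⟩
  simp only [mem_filter, mem_univ, true_and, mem_singleton, Fin.ext_iff]
  unfold dipole
  split_ifs <;> simp_all

lemma card_dipole_neg (hd : 2 ≤ d) : #{i | dipole d i < 0} = 1 := by
  rw [card_eq_one]
  refine ⟨⟨1, by omega⟩, ?_⟩
  ext ⟨i, hi⟩
  simp only [mem_filter, mem_univ, true_and, mem_singleton, Fin.ext_iff]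
  unfold dipole
  split_ifs <;> simp_all

end Dipole

section Tomography

variable {d : ℕ}

lemma A2_mulVec_eq_zero_iff (v : Fin d × Fin d → ℝ) :
    A2 d *ᵥ v = 0 ↔ (∀ i, ∑ k, v (i, k) = 0) ∧ ∀ k, ∑ i, v (i, k) = 0 := by
  have hrow (i : Fin d) (z : Fin 1) : (A2 d *ᵥ v) (.inl (i, z)) = ∑ k, v (i, k) := by
    simp [A2, mulVec, dotProduct, Fintype.sum_prod_type_right, onesRow, one_apply]
  have hcol (k : Fin d) (z : Fin 1) : (A2 d *ᵥ v) (.inr (z, k)) = ∑ i, v (i, k) := by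
    simp [A2, mulVec, dotProduct, Fintype.sum_prod_type, onesRow, one_apply]
  refine ⟨fun h => ⟨fun i => hrow i 0 ▸ congrFun h _, fun k => hcol k 0 ▸ congrFun h _⟩, ?_⟩
  rintro ⟨hr, hc⟩
  ext (⟨i, z⟩ | ⟨z, k⟩)
  · exact (hrow i z).trans (hr i)
  · exact (hcol k z).trans (hc k)

lemma A3_mulVec_eq_zero_iff (v : (Fin d × Fin d) × Fin d → ℝ) :
    A3 d *ᵥ v = 0 ↔ (∀ j k, ∑ i, v ((i, j), k) = 0) ∧ (∀ i k, ∑ j, v ((i, j), k) = 0) ∧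
      ∀ i j, ∑ k, v ((i, j), k) = 0 := by
  have h₁ (j k : Fin d) (z : Fin 1) :
      (A3 d *ᵥ v) (.inl ((z, j), k)) = ∑ i, v ((i, j), k) := by
    simp [A3, mulVec, dotProduct, Fintype.sum_prod_type, onesRow, one_apply]
  have h₂ (i k : Fin d) (z : Fin 1) :
      (A3 d *ᵥ v) (.inr (.inl ((i, z), k))) = ∑ j, v ((i, j), k) := by
    simp [A3, mulVec, dotProduct, Fintype.sum_prod_type_right, onesRow, one_apply]
  have h₃ (i j : Fin d) (z : Fin 1) :
      (A3 d *ᵥ v) (.inr (.inr ((i, j), z))) = ∑ k, v ((i, j), k) := by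
    simp [A3, mulVec, dotProduct, Fintype.sum_prod_type, onesRow, one_apply, ite_and]
  refine ⟨fun h => ⟨fun j k => h₁ j k 0 ▸ congrFun h _,
    fun i k => h₂ i k 0 ▸ congrFun h _, fun i j => h₃ i j 0 ▸ congrFun h _⟩, ?_⟩
  rintro ⟨hs₁, hs₂, hs₃⟩
  ext (⟨⟨z, j⟩, k⟩ | ⟨⟨i, z⟩, k⟩ | ⟨⟨i, j⟩, z⟩)
  · exact (h₁ j k z).trans (hs₁ j k)
  · exact (h₂ i k z).trans (hs₂ i k)
  · exact (h₃ i j z).trans (hs₃ i j)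

theorem card_ne_zero_and_card_neg_of_A2_mulVec_eq_zero {v : Fin d × Fin d → ℝ}
    (hAv : A2 d *ᵥ v = 0) (hv : v ≠ 0) : 4 ≤ #{q | v q ≠ 0} ∧ 2 ≤ #{q | v q < 0} :=
  have ⟨hrow, hcol⟩ := (A2_mulVec_eq_zero_iff v).mp hAv
  card_ne_zero_and_card_neg_of_line_sums_eq_zero₂ hrow hcol hv

theorem card_ne_zero_and_card_neg_of_A3_mulVec_eq_zero {v : (Fin d × Fin d) × Fin d → ℝ}
    (hAv : A3 d *ᵥ v = 0) (hv : v ≠ 0) : 8 ≤ #{q | v q ≠ 0} ∧ 4 ≤ #{q | v q < 0} :=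
  have ⟨h₁, h₂, h₃⟩ := (A3_mulVec_eq_zero_iff v).mp hAv
  card_ne_zero_and_card_neg_of_line_sums_eq_zero₃ h₁ h₂ h₃ hv

def dipole₂ (d : ℕ) : Fin d × Fin d → ℝ := outerProd (dipole d) (dipole d)

def dipole₃ (d : ℕ) : (Fin d × Fin d) × Fin d → ℝ := outerProd (dipole₂ d) (dipole d)

lemma A2_mulVec_dipole₂ (hd : 2 ≤ d) : A2 d *ᵥ dipole₂ d = 0 := by
  refine (A2_mulVec_eq_zero_iff _).mpr ⟨fun i => ?_, fun k => ?_⟩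
  · rw [dipole₂, sum_outerProd_right, sum_dipole hd, mul_zero]
  · rw [dipole₂, sum_outerProd_left, sum_dipole hd, zero_mul]

lemma A3_mulVec_dipole₃ (hd : 2 ≤ d) : A3 d *ᵥ dipole₃ d = 0 := by
  refine (A3_mulVec_eq_zero_iff _).mpr ⟨fun j k => ?_, fun i k => ?_, fun i j => ?_⟩
  · simp [dipole₃, dipole₂, outerProd, ← sum_mul, sum_dipole hd]
  · simp [dipole₃, dipole₂, outerProd, ← sum_mul, ← mul_sum, sum_dipole hd]
  · rw [dipole₃, sum_outerProd_right, sum_dipole hd, mul_zero]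

lemma card_dipole₂_ne_zero (hd : 2 ≤ d) : #{q | dipole₂ d q ≠ 0} = 4 := by
  rw [dipole₂, card_outerProd_ne_zero, card_dipole_ne_zero hd]

lemma card_dipole₂_pos (hd : 2 ≤ d) : #{q | 0 < dipole₂ d q} = 2 := by
  rw [dipole₂, card_outerProd_pos, card_dipole_pos hd, card_dipole_neg hd]

lemma card_dipole₂_neg (hd : 2 ≤ d) : #{q | dipole₂ d q < 0} = 2 := by
  rw [dipole₂, card_outerProd_neg, card_dipole_pos hd, card_dipole_neg hd]

lemma card_dipole₃_ne_zero (hd : 2 ≤ d) : #{q | dipole₃ d q ≠ 0} = 8 := by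
  rw [dipole₃, card_outerProd_ne_zero, card_dipole₂_ne_zero hd, card_dipole_ne_zero hd]

lemma card_dipole₃_neg (hd : 2 ≤ d) : #{q | dipole₃ d q < 0} = 4 := by
  rw [dipole₃, card_outerProd_neg, card_dipole₂_pos hd, card_dipole₂_neg hd,
    card_dipole_pos hd, card_dipole_neg hd]

end Tomography

/-- for `d ≥ 3`, `D ∈ {2,3}`, every nonzero null space vector of
`A_d^D` has at least `2^D` nonzero entries and at least `2^{D-1}` negative
entries, both bounds are attained, and the Kruskal rank of `A_d^D` is `2^D - 1`. -/
theorem stmt11 (d : ℕ) (hd : 3 ≤ d) :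
    ((∀ v : Fin d × Fin d → ℝ, (A2 d).mulVec v = 0 → v ≠ 0 →
        2 ^ 2 ≤ (Finset.univ.filter (fun i => v i ≠ 0)).card ∧
        2 ^ 1 ≤ (Finset.univ.filter (fun i => v i < 0)).card) ∧
      (∃ v : Fin d × Fin d → ℝ, (A2 d).mulVec v = 0 ∧ v ≠ 0 ∧
        (Finset.univ.filter (fun i => v i ≠ 0)).card = 2 ^ 2 ∧
        (Finset.univ.filter (fun i => v i < 0)).card = 2 ^ 1) ∧
      IsGreatest {r : ℕ | r ≤ d ^ 2 ∧ colsIndep (A2 d) r} (2 ^ 2 - 1)) ∧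
    ((∀ v : (Fin d × Fin d) × Fin d → ℝ, (A3 d).mulVec v = 0 → v ≠ 0 →
        2 ^ 3 ≤ (Finset.univ.filter (fun i => v i ≠ 0)).card ∧
        2 ^ 2 ≤ (Finset.univ.filter (fun i => v i < 0)).card) ∧
      (∃ v : (Fin d × Fin d) × Fin d → ℝ, (A3 d).mulVec v = 0 ∧ v ≠ 0 ∧
        (Finset.univ.filter (fun i => v i ≠ 0)).card = 2 ^ 3 ∧
        (Finset.univ.filter (fun i => v i < 0)).card = 2 ^ 2) ∧
      IsGreatest {r : ℕ | r ≤ d ^ 3 ∧ colsIndep (A3 d) r} (2 ^ 3 - 1)) := by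
  have hd₂ : 2 ≤ d := by omega
  have hv₂ : dipole₂ d ≠ 0 := fun h => by simpa [h] using card_dipole₂_ne_zero hd₂
  have hv₃ : dipole₃ d ≠ 0 := fun h => by simpa [h] using card_dipole₃_ne_zero hd₂
  have hcard₂ : d ^ 2 = Fintype.card (Fin d × Fin d) := by simp [sq]
  have hcard₃ : d ^ 3 = Fintype.card ((Fin d × Fin d) × Fin d) := by simp [pow_succ]
  refine ⟨⟨fun v => card_ne_zero_and_card_neg_of_A2_mulVec_eq_zero,
      ⟨dipole₂ d, A2_mulVec_dipole₂ hd₂, hv₂, card_dipole₂_ne_zero hd₂, card_dipole₂_neg hd₂⟩,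
      ?_⟩,
    fun v => card_ne_zero_and_card_neg_of_A3_mulVec_eq_zero,
      ⟨dipole₃ d, A3_mulVec_dipole₃ hd₂, hv₃, card_dipole₃_ne_zero hd₂, card_dipole₃_neg hd₂⟩,
      ?_⟩
  · rw [hcard₂]
    exact isGreatest_colsIndep
      (fun v hAv hv => (card_ne_zero_and_card_neg_of_A2_mulVec_eq_zero hAv hv).1)
      (A2_mulVec_dipole₂ hd₂) hv₂ (card_dipole₂_ne_zero hd₂)
  · rw [hcard₃]
    exact isGreatest_colsIndep
      (fun v hAv hv => (card_ne_zero_and_card_neg_of_A3_mulVec_eq_zero hAv hv).1)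
      (A3_mulVec_dipole₃ hd₂) hv₃ (card_dipole₃_ne_zero hd₂)
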